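/- arXiv:1302.0723 — 2 statements merged into one kernel-verified Lean document; each statement's English description precedes it below -/
import Mathlib

section
/- (Single-pair conditional entropy reduction bound for distant locations.) Let p and q be single locations whose column indices differ by at least m+1, and let A be any vector of locations with p, q and the entries of A pairwise distinct. Then H(Z_p | Z_A) − H(Z_p | Z_A, Z_q) ≤ log(1 + ξ²/(η(1+η))). -/
open Finset

/-- Covariance matrix of the GP: kernel plus sensor noise on the diagonal. -/
noncomputable def SigmaMat {D : Type*} [DecidableEq D] (K : D → D → ℝ) (σn2 : ℝ) :
    Matrix D D ℝ :=
  Matrix.of fun x y => K x y + if x = y then σn2 else 0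

/-- Submatrix of covariances between the entries of two finsets of locations. -/
noncomputable def subMat {D : Type*} (Cov : Matrix D D ℝ) (a s : Finset D) :
    Matrix ↥a ↥s ℝ :=
  Matrix.of fun p q => Cov p.1 q.1

/-- Posterior covariance `Σ_{aa|s} = Σ_{aa} - Σ_{as} Σ_{ss}⁻¹ Σ_{sa}`. -/
noncomputable def postCov {D : Type*} [DecidableEq D] (Cov : Matrix D D ℝ) (a s : Finset D) :
    Matrix ↥a ↥a ℝ :=
  subMat Cov a a - subMat Cov a s * (subMat Cov s s)⁻¹ * subMat Cov s a

/-- Gaussian conditional entropy `H(Z_a | Z_s) = (1/2) log((2πe)^{|a|} det Σ_{aa|s})`. -/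
noncomputable def condEnt {D : Type*} [DecidableEq D] (Cov : Matrix D D ℝ) (a s : Finset D) : ℝ :=
  (1/2) * Real.log ((2 * Real.pi * Real.exp 1) ^ a.card * (postCov Cov a s).det)

/-- Gaussian joint entropy `H(Z_a)`. -/
noncomputable def ent {D : Type*} [DecidableEq D] (Cov : Matrix D D ℝ) (a : Finset D) : ℝ :=
  condEnt Cov a ∅

/-- Mutual information `I(Z_a ; Z_b) = H(Z_a) - H(Z_a | Z_b)`. -/
noncomputable def mutInf {D : Type*} [DecidableEq D] (Cov : Matrix D D ℝ) (a b : Finset D) : ℝ :=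
  ent Cov a - condEnt Cov a b

/-- Conditional mutual information `I(Z_a ; Z_b | Z_s) = H(Z_a | Z_s) - H(Z_a | Z_s, Z_b)`. -/
noncomputable def condMutInf {D : Type*} [DecidableEq D] (Cov : Matrix D D ℝ)
    (a b s : Finset D) : ℝ :=
  condEnt Cov a s - condEnt Cov a (s ∪ b)

/-- Posterior variance `Σ_{yy|A}` of a single location `y`. -/
noncomputable def postVar {D : Type*} [DecidableEq D] (Cov : Matrix D D ℝ) (y : D)
    (A : Finset D) : ℝ :=
  postCov Cov {y} A ⟨y, Finset.mem_singleton_self y⟩ ⟨y, Finset.mem_singleton_self y⟩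

/-- Concatenation `x_{i:j}` of the column selections from column `i` to column `j`. -/
def seg {D : Type*} [DecidableEq D] (x : ℕ → Finset D) (i j : ℕ) : Finset D :=
  (Finset.Icc i j).biUnion x

/-- The set of the `r` locations of column `i`. -/
def column {D : Type*} [Fintype D] (col : D → ℕ) (i : ℕ) : Finset D :=
  Finset.univ.filter (fun p => col p = i)

/-- The complementary vector `u_i` of unobserved locations of column `i` for a path `x`. -/
def ucomp {D : Type*} [Fintype D] [DecidableEq D] (col : D → ℕ) (x : ℕ → Finset D) :
    ℕ → Finset D :=
  fun i => column col i \ x i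

/-- A path selects, in every column `i = 1,…,n`, a vector of `k` distinct locations of
column `i`. -/
def IsPath {D : Type*} [Fintype D] (col : D → ℕ) (n k : ℕ) (x : ℕ → Finset D) : Prop :=
  ∀ i, 1 ≤ i → i ≤ n → x i ⊆ column col i ∧ (x i).card = k

/-!
The entropy gap equals `½ log (v₁ / v₂)` for the posterior variances `v₁ = Σ_{pp|A}` and
`v₂ = Σ_{pp|A,q}`. Submodularity bounds `v₁ - v₂` by the prior reduction
`K(p,q)² / (σ_s² + σ_n²) ≤ σ_s⁴ ξ² / (σ_s² + σ_n²)`, and `v₂ ≥ σ_n²` because the noise survives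
conditioning: removing `σ_n²` from the `p`-corner of the covariance of `(A, q, p)` leaves a
positive semidefinite matrix, whose Schur complement is `v₂ - σ_n²`. Hence
`v₁ / v₂ ≤ 1 + ξ² / (η (1 + η))`.
-/

open Matrix

theorem subMat_conjTranspose {D : Type*} {Cov : Matrix D D ℝ} (hCov : Cov.IsHermitian)
    (a s : Finset D) : (subMat Cov a s)ᴴ = subMat Cov s a := by
  ext i j
  exact hCov.apply i.1 j.1

theorem Real.log_sub_log_le_log_one_add_div {σ δ v₁ v₂ : ℝ} (hσ : 0 < σ) (hδ : 0 ≤ δ)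
    (hv₁ : 0 < v₁) (hv₂ : σ ≤ v₂) (h : v₁ - v₂ ≤ δ) :
    Real.log v₁ - Real.log v₂ ≤ Real.log (1 + δ / σ) := by
  have hv₂pos : 0 < v₂ := hσ.trans_le hv₂
  rw [← Real.log_div hv₁.ne' hv₂pos.ne']
  refine Real.log_le_log (div_pos hv₁ hv₂pos) ?_
  rw [div_le_iff₀ hv₂pos]
  have : δ ≤ δ / σ * v₂ := by
    rw [div_mul_eq_mul_div, le_div_iff₀ hσ]
    exact mul_le_mul_of_nonneg_left hv₂ hδ
  linarith

section Posterior

variable {D : Type*} [DecidableEq D] (Cov : Matrix D D ℝ)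

theorem condEnt_singleton (p : D) (s : Finset D) :
    condEnt Cov {p} s = 1 / 2 * Real.log (2 * Real.pi * Real.exp 1 * postVar Cov p s) := by
  rw [condEnt, det_unique, Finset.card_singleton, pow_one]
  rfl

theorem condEnt_singleton_sub_condEnt_singleton {p : D} {s t : Finset D}
    (hs : 0 < postVar Cov p s) (ht : 0 < postVar Cov p t) :
    condEnt Cov {p} s - condEnt Cov {p} t =
      (Real.log (postVar Cov p s) - Real.log (postVar Cov p t)) / 2 := by
  have hc : 2 * Real.pi * Real.exp 1 ≠ 0 := by positivity
  rw [condEnt_singleton, condEnt_singleton, Real.log_mul hc hs.ne', Real.log_mul hc ht.ne']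
  ring

theorem postVar_empty (p : D) : postVar Cov p ∅ = Cov p p := by
  simp [postVar, postCov, subMat, mul_apply]

theorem postVar_singleton (p q : D) :
    postVar Cov p {q} = Cov p p - Cov p q * (Cov q q)⁻¹ * Cov q p := by
  simp [postVar, postCov, subMat, mul_apply]

end Posterior

section Noise

variable {D : Type*} [DecidableEq D] {K : D → D → ℝ} {σn2 : ℝ}

theorem posDef_sigmaMat (hK : (of K).PosSemidef) (hn : 0 < σn2) : (SigmaMat K σn2).PosDef := by
  have hS : SigmaMat K σn2 = of K + σn2 • (1 : Matrix D D ℝ) := by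
    ext x y
    simp [SigmaMat, one_apply]
  exact hS ▸ PosDef.posSemidef_add hK (PosDef.one.smul hn)

theorem fromBlocks_subMat_sigmaMat {a s : Finset D} (hdisj : Disjoint a s) :
    fromBlocks (subMat (SigmaMat K σn2) s s) (subMat (SigmaMat K σn2) s a)
        (subMat (SigmaMat K σn2) a s) (subMat (SigmaMat K σn2) a a - σn2 • 1) =
      (of K).submatrix (Sum.elim (↑) (↑)) (Sum.elim (↑) (↑)) +
        diagonal (Sum.elim (fun _ => σn2) 0) := by
  have hne (i : ↥s) (j : ↥a) : (i : D) ≠ j := fun h =>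
    Finset.disjoint_left.mp hdisj j.2 (h ▸ i.2)
  ext (i | i) (j | j) <;>
    simp [SigmaMat, subMat, diagonal_apply, one_apply, hne, (hne _ _).symm]

theorem posSemidef_postCov_sub_smul_one (hK : (of K).PosSemidef) (hn : 0 < σn2)
    {a s : Finset D} (hdisj : Disjoint a s) :
    (postCov (SigmaMat K σn2) a s - σn2 • 1).PosSemidef := by
  have hS := posDef_sigmaMat hK hn
  have hss : (subMat (SigmaMat K σn2) s s).PosDef := hS.submatrix Subtype.val_injective
  have := hss.isUnit.invertible
  have hblock := (PosDef.fromBlocks₁₁ (subMat (SigmaMat K σn2) s a)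
    (subMat (SigmaMat K σn2) a a - σn2 • 1) hss).mp (by
      rw [subMat_conjTranspose hS.isHermitian, fromBlocks_subMat_sigmaMat hdisj]
      exact (hK.submatrix _).add (.diagonal fun i => by cases i <;> simp [hn.le]))
  rw [subMat_conjTranspose hS.isHermitian, sub_right_comm] at hblock
  exact hblock

theorem le_postVar (hK : (of K).PosSemidef) (hn : 0 < σn2) {p : D} {s : Finset D}
    (hp : p ∉ s) : σn2 ≤ postVar (SigmaMat K σn2) p s := by
  have hpost := posSemidef_postCov_sub_smul_one hK hn (Finset.disjoint_singleton_left.mpr hp)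
  simpa [postVar] using hpost.diag_nonneg (i := ⟨p, Finset.mem_singleton_self p⟩)

theorem postVar_empty_sub_postVar_singleton_sigmaMat {σs2 : ℝ} (hK : (of K).IsHermitian)
    (hdiag : ∀ x, K x x = σs2) {p q : D} (hpq : p ≠ q) :
    postVar (SigmaMat K σn2) p ∅ - postVar (SigmaMat K σn2) p {q} =
      K p q ^ 2 / (σs2 + σn2) := by
  have hsymm : K q p = K p q := by simpa using hK.apply p q
  rw [postVar_empty, postVar_singleton]
  simp only [SigmaMat, of_apply, hdiag, hsymm, if_pos, if_neg hpq, if_neg hpq.symm]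
  ring

end Noise

theorem single_pair_entropy_bound_general
    {D : Type*} [DecidableEq D]
    (m : ℕ) (col : D → ℕ)
    (K : D → D → ℝ) (σs2 σn2 ξ : ℝ)
    (hs : 0 < σs2) (hn : 0 < σn2)
    (hKpsd : (Matrix.of K).PosSemidef)
    (hKdiag : ∀ p : D, K p p = σs2)
    (hdecay : ∀ p q : D, (m : ℤ) + 1 ≤ |(col p : ℤ) - (col q : ℤ)| → |K p q| ≤ σs2 * ξ)
    (hsub : ∀ (p q : D) (A : Finset D), p ∉ A → q ∉ A → p ≠ q →
      postVar (SigmaMat K σn2) p A - postVar (SigmaMat K σn2) p (insert q A)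
        ≤ postVar (SigmaMat K σn2) p ∅ - postVar (SigmaMat K σn2) p {q})
    (p q : D) (A : Finset D)
    (hfar : (m : ℤ) + 1 ≤ |(col p : ℤ) - (col q : ℤ)|)
    (hpA : p ∉ A) (hqA : q ∉ A) (hpq : p ≠ q) :
    condEnt (SigmaMat K σn2) {p} A - condEnt (SigmaMat K σn2) {p} (insert q A)
      ≤ Real.log (1 + ξ ^ 2 / ((σn2 / σs2) * (1 + σn2 / σs2))) := by
  have hv₁ := le_postVar hKpsd hn hpA
  have hv₂ := le_postVar hKpsd hn (show p ∉ insert q A by simp [hpq, hpA])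
  have hgain : postVar (SigmaMat K σn2) p A - postVar (SigmaMat K σn2) p (insert q A) ≤
      σs2 ^ 2 * ξ ^ 2 / (σs2 + σn2) := by
    refine (hsub p q A hpA hqA hpq).trans ?_
    rw [postVar_empty_sub_postVar_singleton_sigmaMat hKpsd.isHermitian hKdiag hpq, ← mul_pow,
      ← sq_abs]
    gcongr
    exact hdecay p q hfar
  have hratio : σs2 ^ 2 * ξ ^ 2 / (σs2 + σn2) / σn2 =
      ξ ^ 2 / ((σn2 / σs2) * (1 + σn2 / σs2)) := by
    field_simp
  have hlog :=
    Real.log_sub_log_le_log_one_add_div hn (by positivity) (hn.trans_le hv₁) hv₂ hgain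
  have hlog_nonneg : 0 ≤ Real.log (1 + ξ ^ 2 / ((σn2 / σs2) * (1 + σn2 / σs2))) :=
    Real.log_nonneg (le_add_of_nonneg_right (by positivity))
  rw [hratio] at hlog
  rw [condEnt_singleton_sub_condEnt_singleton _ (hn.trans_le hv₁) (hn.trans_le hv₂)]
  linarith

/-- **Single-pair conditional entropy reduction bound for distant locations.** -/
theorem single_pair_entropy_bound
    {D : Type*} [Fintype D] [DecidableEq D]
    (r n k m : ℕ) (col : D → ℕ)
    (K : D → D → ℝ) (σs2 σn2 l1 ξ : ℝ)
    (hr : 1 ≤ r) (hk1 : 1 ≤ k) (hkr : k ≤ r) (hm : 1 ≤ m)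
    (hs : 0 < σs2) (hn : 0 < σn2) (hl1 : 0 < l1)
    (hξ : ξ = Real.exp (-((m : ℝ) + 1) ^ 2 / (2 * l1 ^ 2)))
    (hKsymm : ∀ p q : D, K p q = K q p)
    (hKpsd : (Matrix.of K).PosSemidef)
    (hKdiag : ∀ p : D, K p p = σs2)
    (hcol : ∀ p : D, 1 ≤ col p ∧ col p ≤ n)
    (hcolcard : ∀ i : ℕ, 1 ≤ i → i ≤ n → (column col i).card = r)
    (hdecay : ∀ p q : D, (m : ℤ) + 1 ≤ |(col p : ℤ) - (col q : ℤ)| → |K p q| ≤ σs2 * ξ)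
    (hsub : ∀ (p q : D) (A : Finset D), p ∉ A → q ∉ A → p ≠ q →
      postVar (SigmaMat K σn2) p A - postVar (SigmaMat K σn2) p (insert q A)
        ≤ postVar (SigmaMat K σn2) p ∅ - postVar (SigmaMat K σn2) p {q})
    (p q : D) (A : Finset D)
    (hfar : (m : ℤ) + 1 ≤ |(col p : ℤ) - (col q : ℤ)|)
    (hpA : p ∉ A) (hqA : q ∉ A) (hpq : p ≠ q) :
    condEnt (SigmaMat K σn2) {p} A - condEnt (SigmaMat K σn2) {p} (insert q A)
      ≤ Real.log (1 + ξ ^ 2 / ((σn2 / σs2) * (1 + σn2 / σs2))) :=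
  single_pair_entropy_bound_general m col K σs2 σn2 ξ hs hn hKpsd hKdiag hdecay hsub p q A hfar hpA
    hqA hpq
end

section
/- (Lemma 3 of the appendix.) Let m+2 ≤ i ≤ n and, for each j = i−m−1, i−m, …, i, let x_j be a vector of k distinct locations of column j. Then H(Z_{x_{i−m−1}} | Z_{x_{i−m:i−1}}) − H(Z_{x_{i−m−1}} | Z_{x_{i−m:i−1}}, Z_{x_i}) ≤ k² · log(1 + ξ²/(η(1+η))). -/
open Finset

/-!
The entropy reduction is a conditional mutual information, which the Schur-complement chain rule
splits over the points `q` of `x_i`: each contributes half the log-ratio of the posterior variance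
of `q` (given `x_{i-m:i-1}` and the earlier points of `x_i`) without and with `x_{i-m-1}` in the
conditioning set. Submodularity bounds the variance drop by the sum of the single-point drops
`K(q,p)² / (σ_s² + σ_n²) ≤ σ_s⁴ ξ² / (σ_s² + σ_n²)` over the `k` points `p` of `x_{i-m-1}`, while
the noise keeps every posterior variance at least `σ_n²`; so each log-ratio is at most
`log (1 + k ξ² / (η (1 + η))) ≤ k log (1 + ξ² / (η (1 + η)))`.
-/

open Matrix

section Schur

variable {D : Type*} {Cov : Matrix D D ℝ}

lemma subMat_posDef (hCov : Cov.PosDef) (t : Finset D) : (subMat Cov t t).PosDef :=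
  hCov.submatrix Subtype.val_injective

variable [DecidableEq D]

lemma submatrix_subMat_union (Cov : Matrix D D ℝ) {a s : Finset D} (h : Disjoint a s) :
    (subMat Cov (a ∪ s) (a ∪ s)).submatrix (Equiv.Finset.union a s h) (Equiv.Finset.union a s h) =
      fromBlocks (subMat Cov a a) (subMat Cov a s) (subMat Cov s a) (subMat Cov s s) := by
  ext (i | i) (j | j) <;> rfl

lemma det_subMat_union (hCov : Cov.PosDef) {a s : Finset D} (h : Disjoint a s) :
    (subMat Cov (a ∪ s) (a ∪ s)).det = (subMat Cov s s).det * (postCov Cov a s).det := by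
  let _ := (subMat_posDef hCov s).isUnit.invertible
  rw [← det_submatrix_equiv_self (Equiv.Finset.union a s h), submatrix_subMat_union Cov h,
    det_fromBlocks₂₂, invOf_eq_nonsing_inv, postCov]

lemma det_postCov_pos (hCov : Cov.PosDef) {a s : Finset D} (h : Disjoint a s) :
    0 < (postCov Cov a s).det :=
  pos_of_mul_pos_right (det_subMat_union hCov h ▸ (subMat_posDef hCov _).det_pos)
    (subMat_posDef hCov s).det_pos.le

lemma det_postCov_singleton (Cov : Matrix D D ℝ) (q : D) (W : Finset D) :
    (postCov Cov {q} W).det = postVar Cov q W :=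
  det_unique _

lemma postVar_pos (hCov : Cov.PosDef) {q : D} {W : Finset D} (hq : q ∉ W) :
    0 < postVar Cov q W :=
  det_postCov_singleton Cov q W ▸ det_postCov_pos hCov (disjoint_singleton_left.2 hq)

lemma condEnt_eq_log_det (hCov : Cov.PosDef) {a s : Finset D} (h : Disjoint a s) :
    condEnt Cov a s = (a.card * Real.log (2 * Real.pi * Real.exp 1)
      + Real.log (subMat Cov (a ∪ s) (a ∪ s)).det - Real.log (subMat Cov s s).det) / 2 := by
  rw [condEnt, Real.log_mul (by positivity) (det_postCov_pos hCov h).ne', Real.log_pow,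
    det_subMat_union hCov h, Real.log_mul (subMat_posDef hCov s).det_pos.ne'
      (det_postCov_pos hCov h).ne']
  ring

lemma log_det_subMat_insert (hCov : Cov.PosDef) {q : D} {W : Finset D} (hq : q ∉ W) :
    Real.log (subMat Cov (insert q W) (insert q W)).det =
      Real.log (subMat Cov W W).det + Real.log (postVar Cov q W) := by
  have hd : Disjoint {q} W := disjoint_singleton_left.2 hq
  rw [insert_eq, det_subMat_union hCov hd, det_postCov_singleton,
    Real.log_mul (subMat_posDef hCov W).det_pos.ne' (postVar_pos hCov hq).ne']

lemma condEnt_sub_condEnt_insert (hCov : Cov.PosDef) {a W : Finset D} {q : D}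
    (ha : Disjoint a W) (hq : q ∉ a ∪ W) :
    condEnt Cov a W - condEnt Cov a (insert q W) =
      (Real.log (postVar Cov q W) - Real.log (postVar Cov q (a ∪ W))) / 2 := by
  have hqa : q ∉ a := fun h => hq (mem_union_left W h)
  have hqW : q ∉ W := fun h => hq (mem_union_right a h)
  rw [condEnt_eq_log_det hCov ha, condEnt_eq_log_det hCov (disjoint_insert_right.2 ⟨hqa, ha⟩),
    union_insert, log_det_subMat_insert hCov hq, log_det_subMat_insert hCov hqW]
  ring

lemma postVar_empty_sub_postVar_singleton {Cov : Matrix D D ℝ} (hCov : Cov.IsHermitian)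
    (q p : D) : postVar Cov q ∅ - postVar Cov q {p} = Cov q p ^ 2 / Cov p p := by
  have hpq : Cov p q = Cov q p := hCov.apply q p
  simp only [postVar, postCov, subMat, inv_subsingleton, of_apply, Ring.inverse_eq_inv,
    Matrix.sub_apply, mul_apply, univ_eq_empty, sum_empty, zero_mul, sum_const_zero, sub_zero,
    univ_unique, sum_singleton, default_singleton, diagonal_apply_eq, hpq, sub_sub_cancel]
  ring

end Schur

section Noise

variable {D : Type*} [DecidableEq D] {Cov : Matrix D D ℝ} {σ : ℝ}

lemma posDef_of_posSemidef_sub_smul_one (hσ : 0 < σ) (hCov : (Cov - σ • 1).PosSemidef) :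
    Cov.PosDef := by
  simpa using PosDef.posSemidef_add hCov (PosDef.one.smul hσ)

lemma le_postVar_s8 (hσ : 0 < σ) (hCov : (Cov - σ • 1).PosSemidef) {q : D} {W : Finset D}
    (hq : q ∉ W) : σ ≤ postVar Cov q W := by
  have hd : Disjoint {q} W := disjoint_singleton_left.2 hq
  have hPD := posDef_of_posSemidef_sub_smul_one hσ hCov
  set B := subMat Cov {q} W
  have hBC : subMat Cov W {q} = Bᴴ := by
    ext w p
    exact (hPD.isHermitian.apply _ _).symm
  have hne : ∀ (i : ↥({q} : Finset D)) (j : ↥W), (i : D) ≠ j := fun i j h =>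
    hq (mem_singleton.1 i.2 ▸ h ▸ j.2)
  -- Adding `σ` back on the `W`-block of `Σ - σ • 1` gives a PSD block matrix whose Schur
  -- complement is `postVar Cov q W - σ`.
  have hblocks : fromBlocks (subMat Cov {q} {q} - σ • 1) B Bᴴ (subMat Cov W W) =
      (Cov - σ • 1).submatrix (Sum.elim Subtype.val Subtype.val)
        (Sum.elim Subtype.val Subtype.val) + diagonal (Sum.elim 0 fun _ => σ) := by
    rw [← hBC]
    ext (i | i) (j | j)
    · simp [subMat, Matrix.sub_apply, one_apply, diagonal_apply]
    · simp [subMat, B, Matrix.sub_apply, hne]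
    · simp [subMat, B, Matrix.sub_apply, (hne _ _).symm]
    · simp [subMat, Matrix.sub_apply, one_apply, diagonal_apply]
  have hpsd : (fromBlocks (subMat Cov {q} {q} - σ • 1) B Bᴴ (subMat Cov W W)).PosSemidef := by
    rw [hblocks]
    exact (hCov.submatrix _).add (.diagonal fun i => by cases i <;> simp [hσ.le])
  let _ := (subMat_posDef hPD W).isUnit.invertible
  have hschur := ((subMat_posDef hPD W).fromBlocks₂₂ _ B).1 hpsd
  set q' : ↥({q} : Finset D) := ⟨q, mem_singleton_self q⟩
  have := hschur.diag_nonneg (i := q')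
  rw [← hBC] at this
  simp only [Matrix.sub_apply, Matrix.smul_apply, one_apply_eq, smul_eq_mul, mul_one] at this
  have hpost : postVar Cov q W =
      subMat Cov {q} {q} q' q' - (B * (subMat Cov W W)⁻¹ * subMat Cov W {q}) q' q' := rfl
  linarith

end Noise

section Submodular

variable {D : Type*} [DecidableEq D] {Cov : Matrix D D ℝ}

def VarReductionSubmodular (Cov : Matrix D D ℝ) : Prop :=
  ∀ (p q : D) (A : Finset D), p ∉ A → q ∉ A → p ≠ q →
    postVar Cov p A - postVar Cov p (insert q A) ≤ postVar Cov p ∅ - postVar Cov p {q}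

lemma postVar_sub_postVar_union_le (hsub : VarReductionSubmodular Cov) {q : D} {a W : Finset D}
    {c : ℝ} (ha : Disjoint a W) (hq : q ∉ a ∪ W)
    (hc : ∀ p ∈ a, postVar Cov q ∅ - postVar Cov q {p} ≤ c) :
    postVar Cov q W - postVar Cov q (a ∪ W) ≤ a.card * c := by
  induction a using Finset.induction_on with
  | empty => simp
  | insert p a hpa ih =>
    have hpW : p ∉ W := disjoint_left.1 ha (mem_insert_self p a)
    have hqp : q ≠ p := by rintro rfl; exact hq (mem_union_left W (mem_insert_self q a))
    have hqa : q ∉ a ∪ W := fun h => hq (union_subset_union_left (subset_insert p a) h)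
    have hstep := hsub q p (a ∪ W) hqa (by simp [hpa, hpW]) hqp
    have hrest := ih (ha.mono_left (subset_insert p a)) hqa fun r hr => hc r (mem_insert_of_mem hr)
    rw [insert_union, card_insert_of_notMem hpa]
    push_cast
    linarith [hc p (mem_insert_self p a)]

variable {σ c : ℝ}

lemma log_postVar_sub_log_postVar_union_le (hσ : 0 < σ) (hCov : (Cov - σ • 1).PosSemidef)
    (hsub : VarReductionSubmodular Cov) (hc0 : 0 ≤ c) {q : D} {a W : Finset D}
    (ha : Disjoint a W) (hq : q ∉ a ∪ W)
    (hc : ∀ p ∈ a, postVar Cov q ∅ - postVar Cov q {p} ≤ c) :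
    Real.log (postVar Cov q W) - Real.log (postVar Cov q (a ∪ W)) ≤
      Real.log (1 + a.card * c / σ) := by
  have hW := le_postVar_s8 hσ hCov fun h => hq (mem_union_right a h)
  have haW := le_postVar_s8 hσ hCov hq
  have hdiff := postVar_sub_postVar_union_le hsub ha hq hc
  have hgain : a.card * c ≤ a.card * c / σ * postVar Cov q (a ∪ W) := by
    rw [div_mul_eq_mul_div, le_div_iff₀ hσ]
    exact mul_le_mul_of_nonneg_left haW (by positivity)
  rw [← Real.log_div (by linarith) (by linarith)]
  refine Real.log_le_log (div_pos (by linarith) (by linarith)) ?_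
  rw [div_le_iff₀ (by linarith)]
  linarith

lemma condEnt_sub_condEnt_union_le (hσ : 0 < σ) (hCov : (Cov - σ • 1).PosSemidef)
    (hsub : VarReductionSubmodular Cov) (hc0 : 0 ≤ c) {a S b : Finset D}
    (haS : Disjoint a S) (hab : Disjoint a b) (hbS : Disjoint b S)
    (hc : ∀ q ∈ b, ∀ p ∈ a, postVar Cov q ∅ - postVar Cov q {p} ≤ c) :
    condEnt Cov a S - condEnt Cov a (S ∪ b) ≤ b.card * Real.log (1 + a.card * c / σ) / 2 := by
  induction b using Finset.induction_on with
  | empty => simp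
  | insert q b hqb ih =>
    have hqa : q ∉ a := disjoint_right.1 hab (mem_insert_self q b)
    have hqS : q ∉ S := disjoint_left.1 hbS (mem_insert_self q b)
    have haSb : Disjoint a (S ∪ b) :=
      disjoint_union_right.2 ⟨haS, hab.mono_right (subset_insert q b)⟩
    have hq : q ∉ a ∪ (S ∪ b) := by simp [hqa, hqS, hqb]
    have hstep := condEnt_sub_condEnt_insert (posDef_of_posSemidef_sub_smul_one hσ hCov) haSb hq
    have hlog := log_postVar_sub_log_postVar_union_le hσ hCov hsub hc0 haSb hq
      (hc q (mem_insert_self q b))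
    have hrest := ih (hab.mono_right (subset_insert q b)) (hbS.mono_left (subset_insert q b))
      fun r hr => hc r (mem_insert_of_mem hr)
    rw [union_insert, card_insert_of_notMem hqb]
    push_cast
    linarith

end Submodular

lemma disjoint_of_forall_apply_lt {α β : Type*} [Preorder β] (f : α → β) {s t : Finset α}
    (h : ∀ p ∈ s, ∀ q ∈ t, f p < f q) : Disjoint s t :=
  disjoint_left.2 fun p hs ht => lt_irrefl _ (h p hs p ht)

section Window

variable {D : Type*} [Fintype D] {col : D → ℕ} {x : ℕ → Finset D} {m i : ℕ}

lemma col_eq_of_mem_window (hx : ∀ j, i - m - 1 ≤ j → j ≤ i → x j ⊆ column col j) {j : ℕ}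
    (hj : i - m - 1 ≤ j) (hj' : j ≤ i) {p : D} (hp : p ∈ x j) : col p = j :=
  (mem_filter.1 (hx j hj hj' hp)).2

lemma col_mem_Icc_of_mem_seg [DecidableEq D] (hx : ∀ j, i - m - 1 ≤ j → j ≤ i → x j ⊆ column col j)
    {p : D} (hp : p ∈ seg x (i - m) (i - 1)) : i - m ≤ col p ∧ col p ≤ i - 1 := by
  obtain ⟨j, hj, hpj⟩ := mem_biUnion.1 hp
  rw [mem_Icc] at hj
  rw [col_eq_of_mem_window hx (by omega) (by omega) hpj]
  exact hj

lemma disjoint_window [DecidableEq D] (hi : m + 1 ≤ i)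
    (hx : ∀ j, i - m - 1 ≤ j → j ≤ i → x j ⊆ column col j) :
    Disjoint (x (i - m - 1)) (seg x (i - m) (i - 1)) ∧ Disjoint (x (i - m - 1)) (x i) ∧
      Disjoint (x i) (seg x (i - m) (i - 1)) := by
  have ha := fun p (hp : p ∈ x (i - m - 1)) => col_eq_of_mem_window hx le_rfl (by omega) hp
  have hb := fun q (hq : q ∈ x i) => col_eq_of_mem_window hx (by omega) le_rfl hq
  refine ⟨disjoint_of_forall_apply_lt col fun p hp q hq => ?_,
    disjoint_of_forall_apply_lt col fun p hp q hq => ?_,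
    (disjoint_of_forall_apply_lt col fun p hp q hq => ?_).symm⟩
  · have := col_mem_Icc_of_mem_seg hx hq
    rw [ha p hp]
    omega
  · rw [ha p hp, hb q hq]
    omega
  · have := col_mem_Icc_of_mem_seg hx hp
    rw [hb q hq]
    omega

lemma le_abs_col_sub_of_mem_window (hi : m + 1 ≤ i)
    (hx : ∀ j, i - m - 1 ≤ j → j ≤ i → x j ⊆ column col j) {p q : D} (hq : q ∈ x i)
    (hp : p ∈ x (i - m - 1)) : (m : ℤ) + 1 ≤ |(col q : ℤ) - (col p : ℤ)| := by
  rw [col_eq_of_mem_window hx (by omega) le_rfl hq, col_eq_of_mem_window hx le_rfl (by omega) hp]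
  exact le_abs.2 (Or.inl (by omega))

end Window

section Kernel

variable {D : Type*} [DecidableEq D] (K : D → D → ℝ) (σ : ℝ)

lemma SigmaMat_sub_smul_one : SigmaMat K σ - σ • 1 = of K := by
  ext p q
  by_cases h : p = q <;> simp [SigmaMat, one_apply, h]

lemma SigmaMat_apply_self (p : D) : SigmaMat K σ p p = K p p + σ := by
  simp [SigmaMat]

lemma SigmaMat_apply_of_ne {p q : D} (h : p ≠ q) : SigmaMat K σ p q = K p q := by
  simp [SigmaMat, h]

end Kernel

lemma postVar_SigmaMat_reduction_le {D : Type*} [DecidableEq D] {K : D → D → ℝ} {σ B : ℝ}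
    (hK : (SigmaMat K σ).IsHermitian) {p q : D} (hqp : q ≠ p) (hB : |K q p| ≤ B)
    (hpos : 0 ≤ K p p + σ) :
    postVar (SigmaMat K σ) q ∅ - postVar (SigmaMat K σ) q {p} ≤ B ^ 2 / (K p p + σ) := by
  rw [postVar_empty_sub_postVar_singleton hK, SigmaMat_apply_of_ne K σ hqp, SigmaMat_apply_self,
    ← sq_abs]
  gcongr

lemma Real.log_one_add_nat_mul_le (n : ℕ) {x : ℝ} (hx : 0 ≤ x) :
    Real.log (1 + n * x) ≤ n * Real.log (1 + x) := by
  rw [← Real.log_pow]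
  exact Real.log_le_log (by positivity) (one_add_mul_le_pow (by linarith) n)

theorem lemma3_entropy_reduction_general
    {D : Type*} [Fintype D] [DecidableEq D]
    (k m : ℕ) (col : D → ℕ)
    (K : D → D → ℝ) (σs2 σn2 ξ : ℝ)
    (hs : 0 < σs2) (hn : 0 < σn2)
    (hKpsd : (Matrix.of K).PosSemidef)
    (hKdiag : ∀ p : D, K p p = σs2)
    (hdecay : ∀ p q : D, (m : ℤ) + 1 ≤ |(col p : ℤ) - (col q : ℤ)| → |K p q| ≤ σs2 * ξ)
    (hsub : ∀ (p q : D) (A : Finset D), p ∉ A → q ∉ A → p ≠ q →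
      postVar (SigmaMat K σn2) p A - postVar (SigmaMat K σn2) p (insert q A)
        ≤ postVar (SigmaMat K σn2) p ∅ - postVar (SigmaMat K σn2) p {q})
    (i : ℕ) (hi1 : m + 2 ≤ i)
    (x : ℕ → Finset D)
    (hx : ∀ j : ℕ, i - m - 1 ≤ j → j ≤ i → x j ⊆ column col j ∧ (x j).card = k) :
    condEnt (SigmaMat K σn2) (x (i - m - 1)) (seg x (i - m) (i - 1))
        - condEnt (SigmaMat K σn2) (x (i - m - 1)) (seg x (i - m) (i - 1) ∪ x i)
      ≤ (k : ℝ) ^ 2 * Real.log (1 + ξ ^ 2 / ((σn2 / σs2) * (1 + σn2 / σs2))) := by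
  have hx' := fun j hj hj' => (hx j hj hj').1
  obtain ⟨haS, hab, hbS⟩ := disjoint_window (by omega) hx'
  have hCov : (SigmaMat K σn2 - σn2 • 1).PosSemidef := SigmaMat_sub_smul_one K σn2 ▸ hKpsd
  have hpair : ∀ q ∈ x i, ∀ p ∈ x (i - m - 1), postVar (SigmaMat K σn2) q ∅
      - postVar (SigmaMat K σn2) q {p} ≤ (σs2 * ξ) ^ 2 / (σs2 + σn2) := fun q hq p hp => by
    simpa [hKdiag] using postVar_SigmaMat_reduction_le
      (posDef_of_posSemidef_sub_smul_one hn hCov).isHermitian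
      (fun h : q = p => disjoint_left.1 hab hp (h ▸ hq))
      (hdecay q p (le_abs_col_sub_of_mem_window (by omega) hx' hq hp)) (by linarith [hKdiag p])
  have hred := condEnt_sub_condEnt_union_le hn hCov hsub (by positivity) haS hab hbS hpair
  set β := ξ ^ 2 / ((σn2 / σs2) * (1 + σn2 / σs2)) with hβ_def
  have hβ : 0 ≤ β := by positivity
  have hgain : (k : ℝ) * ((σs2 * ξ) ^ 2 / (σs2 + σn2)) / σn2 = k * β := by
    rw [hβ_def]
    field_simp
  rw [(hx i (by omega) le_rfl).2, (hx (i - m - 1) le_rfl (by omega)).2, hgain] at hred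
  have hlog0 : 0 ≤ Real.log (1 + β) := Real.log_nonneg (le_add_of_nonneg_right hβ)
  calc _ ≤ k * Real.log (1 + k * β) / 2 := hred
    _ ≤ k * (k * Real.log (1 + β)) / 2 := by gcongr; exact Real.log_one_add_nat_mul_le k hβ
    _ ≤ k ^ 2 * Real.log (1 + β) := by nlinarith [mul_nonneg (sq_nonneg (k : ℝ)) hlog0]

/-- **Lemma 3 of the appendix.** -/
theorem lemma3_entropy_reduction
    {D : Type*} [Fintype D] [DecidableEq D]
    (r n k m : ℕ) (col : D → ℕ)
    (K : D → D → ℝ) (σs2 σn2 l1 ξ : ℝ)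
    (hr : 1 ≤ r) (hk1 : 1 ≤ k) (hkr : k ≤ r) (hm : 1 ≤ m)
    (hs : 0 < σs2) (hn : 0 < σn2) (hl1 : 0 < l1)
    (hξ : ξ = Real.exp (-((m : ℝ) + 1) ^ 2 / (2 * l1 ^ 2)))
    (hKsymm : ∀ p q : D, K p q = K q p)
    (hKpsd : (Matrix.of K).PosSemidef)
    (hKdiag : ∀ p : D, K p p = σs2)
    (hcol : ∀ p : D, 1 ≤ col p ∧ col p ≤ n)
    (hcolcard : ∀ i : ℕ, 1 ≤ i → i ≤ n → (column col i).card = r)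
    (hdecay : ∀ p q : D, (m : ℤ) + 1 ≤ |(col p : ℤ) - (col q : ℤ)| → |K p q| ≤ σs2 * ξ)
    (hsub : ∀ (p q : D) (A : Finset D), p ∉ A → q ∉ A → p ≠ q →
      postVar (SigmaMat K σn2) p A - postVar (SigmaMat K σn2) p (insert q A)
        ≤ postVar (SigmaMat K σn2) p ∅ - postVar (SigmaMat K σn2) p {q})
    (i : ℕ) (hi1 : m + 2 ≤ i) (hi2 : i ≤ n)
    (x : ℕ → Finset D)
    (hx : ∀ j : ℕ, i - m - 1 ≤ j → j ≤ i → x j ⊆ column col j ∧ (x j).card = k) :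
    condEnt (SigmaMat K σn2) (x (i - m - 1)) (seg x (i - m) (i - 1))
        - condEnt (SigmaMat K σn2) (x (i - m - 1)) (seg x (i - m) (i - 1) ∪ x i)
      ≤ (k : ℝ) ^ 2 * Real.log (1 + ξ ^ 2 / ((σn2 / σs2) * (1 + σn2 / σs2))) :=
  lemma3_entropy_reduction_general k m col K σs2 σn2 ξ hs hn hKpsd hKdiag hdecay hsub i hi1 x hx
end
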